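/- (Continuous relaxation upper bound) Suppose α i ≥ 0 for all i and let α = max_{i} α i. Let U* = max over all f : Fin n → ℝ with f i ≥ 0 and ∑_{i} f i ≤ 1 of ∑_{i} f i·(v i − α i·f i). Then for every selection sequence x, limsup_{T→∞} (1/T)·∑_{t=0}^{T−1} u (x t) t ≤ U* + α·r. -/

import Mathlib

/-!
Let `K i` be the number of times item `i` is selected before `T`, and `A i` the sum of its
memory at those times, so that the total utility is `∑ i, (v i * K i - α i * A i)`.
Telescoping the square of the memory recursion gives `A i ≥ ∑ₜ M i t ^ 2 - r * K i`;
telescoping the recursion itself gives `∑ₜ M i t ≥ K i - 1 / r`, and Cauchy–Schwarz then gives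
`A i ≥ K i ^ 2 / T - r * K i - 2 * K i / (r * T)`. Since the frequencies `K i / T` are feasible
for the relaxation, the average utility is at most `U* + α * r + O(1 / T)`.
-/

/-- The memory of item `i` at time `t`, given decay rate `r` and selection sequence `x`. -/
def memory {n : ℕ} (r : ℝ) (x : ℕ → Fin n) (i : Fin n) : ℕ → ℝ
  | 0 => 0
  | t + 1 => (1 - r) * memory r x i t + r * (if x t = i then 1 else 0)

open Finset Filter Topology

theorem Finset.sum_comp_eq_sum_sum_ite {α ι M : Type*} [Fintype ι] [DecidableEq ι]
    [AddCommMonoid M] (s : Finset α) (x : α → ι) (F : ι → α → M) :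
    ∑ a ∈ s, F (x a) a = ∑ i, ∑ a ∈ s, if x a = i then F i a else 0 := by
  rw [Finset.sum_comm]
  simp

section Memory

variable {n : ℕ} (r : ℝ) (x : ℕ → Fin n) (i : Fin n)

def selectionCount (T : ℕ) : ℝ := ∑ t ∈ range T, if x t = i then 1 else 0

def memoryAtSelections (T : ℕ) : ℝ :=
  ∑ t ∈ range T, if x t = i then memory r x i t else 0

theorem sum_selectionCount (T : ℕ) : ∑ i, selectionCount x i T = T := by
  calc ∑ i, selectionCount x i T = ∑ _t ∈ range T, (1 : ℝ) :=
        (sum_comp_eq_sum_sum_ite (range T) x fun _ _ => 1).symm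
    _ = T := by simp

theorem selectionCount_nonneg (T : ℕ) : 0 ≤ selectionCount x i T :=
  sum_nonneg fun _ _ => by positivity

variable {r}

theorem memory_nonneg (hr0 : 0 ≤ r) (hr1 : r ≤ 1) : ∀ t, 0 ≤ memory r x i t
  | 0 => le_rfl
  | t + 1 => by
    have := memory_nonneg hr0 hr1 t
    simp only [memory]
    split_ifs <;> nlinarith

theorem memory_le_one (hr0 : 0 ≤ r) (hr1 : r ≤ 1) : ∀ t, memory r x i t ≤ 1
  | 0 => zero_le_one
  | t + 1 => by
    have := memory_le_one hr0 hr1 t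
    simp only [memory]
    split_ifs <;> nlinarith

theorem memoryAtSelections_nonneg (hr0 : 0 ≤ r) (hr1 : r ≤ 1) (T : ℕ) :
    0 ≤ memoryAtSelections r x i T :=
  sum_nonneg fun t _ => by have := memory_nonneg x i hr0 hr1 t; positivity

variable (r)

theorem memory_eq_mul_selectionCount_sub_sum (T : ℕ) :
    memory r x i T = r * (selectionCount x i T - ∑ t ∈ range T, memory r x i t) := by
  have step : ∀ t, memory r x i (t + 1) - memory r x i t =
      r * ((if x t = i then 1 else 0) - memory r x i t) := fun t => by
    simp only [memory]; ring
  calc memory r x i T = ∑ t ∈ range T, (memory r x i (t + 1) - memory r x i t) := by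
        rw [sum_range_sub]; exact (sub_zero _).symm
    _ = _ := by simp only [step, ← mul_sum, sum_sub_distrib, selectionCount]

theorem memory_sq_eq (T : ℕ) :
    memory r x i T ^ 2 = 2 * r * (1 - r) * memoryAtSelections r x i T
      + r ^ 2 * selectionCount x i T - r * (2 - r) * ∑ t ∈ range T, memory r x i t ^ 2 := by
  have step : ∀ t, memory r x i (t + 1) ^ 2 - memory r x i t ^ 2 =
      2 * r * (1 - r) * (if x t = i then memory r x i t else 0)
        + r ^ 2 * (if x t = i then 1 else 0) - r * (2 - r) * memory r x i t ^ 2 := fun t => by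
    simp only [memory]; split_ifs <;> ring
  calc memory r x i T ^ 2 = ∑ t ∈ range T, (memory r x i (t + 1) ^ 2 - memory r x i t ^ 2) := by
        rw [sum_range_sub (fun t => memory r x i t ^ 2)]; simp [memory]
    _ = _ := by
      simp only [step, sum_sub_distrib, sum_add_distrib, ← mul_sum, memoryAtSelections,
        selectionCount]

theorem sum_memory_sq_sub_le_memoryAtSelections (hr0 : 0 < r) (hr1 : r < 1) (T : ℕ) :
    ∑ t ∈ range T, memory r x i t ^ 2 - r * selectionCount x i T ≤
      memoryAtSelections r x i T := by
  set Q := ∑ t ∈ range T, memory r x i t ^ 2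
  set K := selectionCount x i T
  set A := memoryAtSelections r x i T
  rcases le_or_gt (Q - r * K) 0 with h | h
  · exact h.trans (memoryAtSelections_nonneg x i hr0.le hr1.le T)
  · have hK := selectionCount_nonneg x i T
    have h1r : 0 < 1 - r := by linarith
    have key : 2 * r * (1 - r) * (A - (Q - r * K)) =
        memory r x i T ^ 2 + r ^ 2 * (Q - r * K) + r ^ 2 * (1 - r) * K := by
      rw [memory_sq_eq]; ring
    have : 0 ≤ 2 * r * (1 - r) * (A - (Q - r * K)) := key ▸ by positivity
    exact sub_nonneg.1 (nonneg_of_mul_nonneg_right this (by positivity))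

theorem selectionCount_sub_inv_le_sum_memory (hr0 : 0 < r) (hr1 : r ≤ 1) (T : ℕ) :
    selectionCount x i T - r⁻¹ ≤ ∑ t ∈ range T, memory r x i t := by
  have h := memory_le_one x i hr0.le hr1 T
  rw [memory_eq_mul_selectionCount_sub_sum, ← le_div_iff₀' hr0, one_div] at h
  linarith

theorem selectionCount_sq_div_le (hr0 : 0 < r) (hr1 : r < 1) {T : ℕ} (hT : 0 < T) :
    (selectionCount x i T ^ 2 - 2 * r⁻¹ * selectionCount x i T) / T - r * selectionCount x i T
      ≤ memoryAtSelections r x i T := by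
  set K := selectionCount x i T
  set S := ∑ t ∈ range T, memory r x i t
  set Q := ∑ t ∈ range T, memory r x i t ^ 2
  have hS : K - r⁻¹ ≤ S := selectionCount_sub_inv_le_sum_memory r x i hr0 hr1.le T
  have hS0 : 0 ≤ S := sum_nonneg fun t _ => memory_nonneg x i hr0.le hr1.le t
  have hK0 : 0 ≤ K := selectionCount_nonneg x i T
  have hr : 0 < r⁻¹ := inv_pos.2 hr0
  have hKS : K ^ 2 - 2 * r⁻¹ * K ≤ S ^ 2 := by
    rcases le_or_gt K r⁻¹ with h | h
    · nlinarith
    · nlinarith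
  have hCS : S ^ 2 ≤ T * Q := by
    simpa using sq_sum_le_card_mul_sum_sq (s := range T) (f := memory r x i)
  have hQ : (K ^ 2 - 2 * r⁻¹ * K) / T ≤ Q := by
    rw [div_le_iff₀' (by exact_mod_cast hT)]; linarith
  linarith [sum_memory_sq_sub_le_memoryAtSelections r x i hr0 hr1 T]

end Memory

section Utility

variable {n : ℕ} {r : ℝ} (x : ℕ → Fin n) (v α : Fin n → ℝ)

theorem sum_utility_eq (T : ℕ) :
    ∑ t ∈ range T, (v (x t) - α (x t) * memory r x (x t) t) =
      ∑ i, (v i * selectionCount x i T - α i * memoryAtSelections r x i T) := by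
  rw [sum_comp_eq_sum_sum_ite (range T) x fun i t => v i - α i * memory r x i t]
  refine sum_congr rfl fun i _ => ?_
  simp only [selectionCount, memoryAtSelections, mul_sum, ← sum_sub_distrib]
  refine sum_congr rfl fun t _ => ?_
  split_ifs <;> simp

theorem le_average_utility (hr0 : 0 ≤ r) (hr1 : r ≤ 1) (hα : ∀ i, 0 ≤ α i) {C : ℝ}
    (hC : ∀ i, C ≤ v i - α i) {T : ℕ} (hT : 0 < T) :
    C ≤ (∑ t ∈ range T, (v (x t) - α (x t) * memory r x (x t) t)) / T := by
  rw [le_div_iff₀ (by exact_mod_cast hT)]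
  calc C * T = ∑ _t ∈ range T, C := by simp [mul_comm]
    _ ≤ _ := sum_le_sum fun t _ => (hC (x t)).trans <| sub_le_sub_left
      (mul_le_of_le_one_right (hα _) (memory_le_one x _ hr0 hr1 t)) _

theorem mul_selectionCount_sub_mul_memoryAtSelections_le (hr0 : 0 < r) (hr1 : r < 1)
    (i : Fin n) (hαi : 0 ≤ α i) {T : ℕ} (hT : 0 < T) :
    v i * selectionCount x i T - α i * memoryAtSelections r x i T ≤
      T * (selectionCount x i T / T * (v i - α i * (selectionCount x i T / T))) +
        (r + 2 / (r * T)) * (α i * selectionCount x i T) := by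
  have hA := mul_le_mul_of_nonneg_left (selectionCount_sq_div_le r x i hr0 hr1 hT) hαi
  have e : α i * ((selectionCount x i T ^ 2 - 2 * r⁻¹ * selectionCount x i T) / T -
      r * selectionCount x i T) = v i * selectionCount x i T -
      (T * (selectionCount x i T / T * (v i - α i * (selectionCount x i T / T))) +
        (r + 2 / (r * T)) * (α i * selectionCount x i T)) := by
    field_simp
    ring
  linarith

theorem average_utility_le (hr0 : 0 < r) (hr1 : r < 1) (hα : ∀ i, 0 ≤ α i) {Ustar : ℝ}
    (hU : IsGreatest {U : ℝ | ∃ f : Fin n → ℝ, (∀ i, 0 ≤ f i) ∧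
      (∑ i : Fin n, f i ≤ 1) ∧ U = ∑ i : Fin n, f i * (v i - α i * f i)} Ustar)
    {B : ℝ} (hB : ∀ i, α i ≤ B) {T : ℕ} (hT : 0 < T) :
    (∑ t ∈ range T, (v (x t) - α (x t) * memory r x (x t) t)) / T ≤
      Ustar + B * r + 2 * B / r / T := by
  have hT' : (0 : ℝ) < T := by exact_mod_cast hT
  set K := fun i => selectionCount x i T
  have hfeasible : ∑ i, K i / T * (v i - α i * (K i / T)) ≤ Ustar := by
    refine hU.2 ⟨fun i => K i / T, fun i => ?_, ?_, rfl⟩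
    · have := selectionCount_nonneg x i T; positivity
    · rw [← sum_div, sum_selectionCount, div_self hT'.ne']
  have hαK : ∑ i, α i * K i ≤ B * T := by
    rw [← sum_selectionCount x T, mul_sum]
    exact sum_le_sum fun i _ => mul_le_mul_of_nonneg_right (hB i) (selectionCount_nonneg x i T)
  rw [sum_utility_eq, div_le_iff₀ hT']
  calc ∑ i, (v i * K i - α i * memoryAtSelections r x i T)
      ≤ ∑ i, (T * (K i / T * (v i - α i * (K i / T))) + (r + 2 / (r * T)) * (α i * K i)) :=
        sum_le_sum fun i _ =>
          mul_selectionCount_sub_mul_memoryAtSelections_le x v α hr0 hr1 i (hα i) hT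
    _ = T * ∑ i, K i / T * (v i - α i * (K i / T)) + (r + 2 / (r * T)) * ∑ i, α i * K i := by
        rw [sum_add_distrib, mul_sum, mul_sum]
    _ ≤ T * Ustar + (r + 2 / (r * T)) * (B * T) := by gcongr
    _ = (Ustar + B * r + 2 * B / r / T) * T := by field_simp; ring

end Utility

/-- (Continuous relaxation upper bound) Let `U*` be the maximum of
`∑ i, f i·(v i − α i·f i)` over all `f ≥ 0` with `∑ i, f i ≤ 1`, and let `α = max_i α i`.
Then every selection sequence has long-run average utility (limsup) at most `U* + α·r`. -/
theorem continuous_relaxation_upper_bound (n : ℕ) (hn : 1 ≤ n) (r : ℝ)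
    (hr0 : 0 < r) (hr1 : r < 1) (v α : Fin n → ℝ) (hα : ∀ i, 0 ≤ α i)
    (Ustar : ℝ)
    (hU : IsGreatest {U : ℝ | ∃ f : Fin n → ℝ, (∀ i, 0 ≤ f i) ∧
      (∑ i : Fin n, f i ≤ 1) ∧ U = ∑ i : Fin n, f i * (v i - α i * f i)} Ustar)
    (x : ℕ → Fin n) :
    Filter.limsup
      (fun T : ℕ =>
        (∑ t ∈ Finset.range T, (v (x t) - α (x t) * memory r x (x t) t)) / (T : ℝ))
      Filter.atTop
      ≤ Ustar + (Finset.univ.sup' ⟨⟨0, hn⟩, Finset.mem_univ _⟩ α) * r := by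
  set B := Finset.univ.sup' ⟨⟨0, hn⟩, Finset.mem_univ _⟩ α
  have hB : ∀ i, α i ≤ B := fun i => le_sup' α (mem_univ i)
  obtain ⟨C, hC⟩ := (Set.finite_range fun i => v i - α i).bddBelow
  have hbound : Tendsto (fun T : ℕ => Ustar + B * r + 2 * B / r / T) atTop
      (𝓝 (Ustar + B * r)) := by
    simpa using tendsto_const_nhds.add (tendsto_const_div_atTop_nhds_zero_nat (2 * B / r))
  refine (limsup_le_limsup ?_ ?_ hbound.isBoundedUnder_le).trans hbound.limsup_eq.le
  · filter_upwards [eventually_gt_atTop 0] with T hT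
      using average_utility_le x v α hr0 hr1 hα hU hB hT
  · refine isCoboundedUnder_le_of_eventually_le _ (x := C) ?_
    filter_upwards [eventually_gt_atTop 0] with T hT
      using le_average_utility x v α hr0.le hr1.le hα (fun i => hC ⟨i, rfl⟩) hT
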